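/- Let {A,B} be a minimum bisection of G (on N vertices, |A| = |B| = N/2) with organized partition value D_C. Then MinCut(G) ≥ (N/8)(λ₂ + λ₃) - D_C/2, where λ₂ ≤ λ₃ are the second and third smallest Laplacian eigenvalues. -/
import Mathlib

open Finset Matrix

/-- Number of edges of `G` with one endpoint in `X` and the other in `Y`
(for disjoint `X`, `Y`). -/
def EC {V : Type*} [Fintype V] [DecidableEq V] (G : SimpleGraph V)
    [DecidableRel G.Adj] (X Y : Finset V) : ℕ :=
  ((X ×ˢ Y).filter (fun p => G.Adj p.1 p.2)).card

/-- `{R, S}` is a bisection of the vertex set. -/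
def IsBisection {V : Type*} [Fintype V] [DecidableEq V] (R S : Finset V) : Prop :=
  R ∪ S = Finset.univ ∧ Disjoint R S ∧ R.card = S.card

section aux
variable {V : Type*} [Fintype V] [DecidableEq V] (G : SimpleGraph V) [DecidableRel G.Adj]

lemma EC_eq_sum (X Y : Finset V) :
    (EC G X Y : ℝ) = ∑ i ∈ X, ∑ j ∈ Y, (if G.Adj i j then (1:ℝ) else 0) := by
  unfold EC
  rw [Finset.card_filter]
  push_cast
  rw [Finset.sum_product]

lemma EC_comm (X Y : Finset V) : (EC G X Y : ℝ) = EC G Y X := by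
  rw [EC_eq_sum, EC_eq_sum, Finset.sum_comm]
  refine Finset.sum_congr rfl fun j _ => Finset.sum_congr rfl fun i _ => ?_
  exact if_congr (G.adj_comm i j) rfl rfl

lemma quad_form (S T : Finset V) (hu : S ∪ T = Finset.univ) (hd : Disjoint S T) (c : ℝ) :
    (fun i => if i ∈ S then c else -c) ⬝ᵥ
      (G.lapMatrix ℝ *ᵥ (fun i => if i ∈ S then c else -c)) = 4 * c^2 * EC G S T := by
  set f : V → ℝ := fun i => if i ∈ S then c else -c with hf
  have h1 : f ⬝ᵥ (G.lapMatrix ℝ *ᵥ f)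
      = (∑ i : V, ∑ j : V, if G.Adj i j then (f i - f j)^2 else 0) / 2 := by
    rw [← Matrix.toLinearMap₂'_apply', SimpleGraph.lapMatrix_toLinearMap₂']
  rw [h1]
  have hsplit : ∀ g : V → ℝ, ∑ i : V, g i = ∑ i ∈ S, g i + ∑ i ∈ T, g i := by
    intro g
    rw [← Finset.sum_union hd, hu]
  have hS : ∀ i ∈ S, f i = c := fun i hi => by simp [hf, hi]
  have hT : ∀ i ∈ T, f i = -c := fun i hi => by
    have : i ∉ S := fun h => (Finset.disjoint_left.mp hd h) hi
    simp [hf, this]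
  have key : (∑ i : V, ∑ j : V, if G.Adj i j then (f i - f j)^2 else 0)
      = 4 * c^2 * EC G S T + 4 * c^2 * EC G T S := by
    rw [hsplit]
    rw [show (∑ i ∈ S, ∑ j : V, if G.Adj i j then (f i - f j)^2 else 0)
        = ∑ i ∈ S, (∑ j ∈ S, (if G.Adj i j then (f i - f j)^2 else 0)
          + ∑ j ∈ T, (if G.Adj i j then (f i - f j)^2 else 0)) from
      Finset.sum_congr rfl fun i _ => hsplit _]
    rw [show (∑ i ∈ T, ∑ j : V, if G.Adj i j then (f i - f j)^2 else 0)
        = ∑ i ∈ T, (∑ j ∈ S, (if G.Adj i j then (f i - f j)^2 else 0)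
          + ∑ j ∈ T, (if G.Adj i j then (f i - f j)^2 else 0)) from
      Finset.sum_congr rfl fun i _ => hsplit _]
    rw [Finset.sum_add_distrib, Finset.sum_add_distrib]
    have hSS : ∑ i ∈ S, ∑ j ∈ S, (if G.Adj i j then (f i - f j)^2 else 0) = 0 := by
      refine Finset.sum_eq_zero fun i hi => Finset.sum_eq_zero fun j hj => ?_
      rw [hS i hi, hS j hj]; simp
    have hTT : ∑ i ∈ T, ∑ j ∈ T, (if G.Adj i j then (f i - f j)^2 else 0) = 0 := by
      refine Finset.sum_eq_zero fun i hi => Finset.sum_eq_zero fun j hj => ?_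
      rw [hT i hi, hT j hj]; simp
    have hST : ∑ i ∈ S, ∑ j ∈ T, (if G.Adj i j then (f i - f j)^2 else 0)
        = 4 * c^2 * EC G S T := by
      rw [EC_eq_sum, Finset.mul_sum]
      refine Finset.sum_congr rfl fun i hi => ?_
      rw [Finset.mul_sum]
      refine Finset.sum_congr rfl fun j hj => ?_
      rw [hS i hi, hT j hj]
      by_cases h : G.Adj i j <;> simp [h] <;> ring
    have hTS : ∑ i ∈ T, ∑ j ∈ S, (if G.Adj i j then (f i - f j)^2 else 0)
        = 4 * c^2 * EC G T S := by
      rw [EC_eq_sum, Finset.mul_sum]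
      refine Finset.sum_congr rfl fun i hi => ?_
      rw [Finset.mul_sum]
      refine Finset.sum_congr rfl fun j hj => ?_
      rw [hT i hi, hS j hj]
      by_cases h : G.Adj i j <;> simp [h] <;> ring
    rw [hSS, hTT, hST, hTS]
    ring
  rw [key, EC_comm G T S]
  ring

end aux

theorem stmt14 {V : Type*} [Fintype V] [DecidableEq V] (G : SimpleGraph V)
    [DecidableRel G.Adj] (n : ℕ) (A B : Finset V) (DC : ℤ) (mc : ℕ) (s : ℝ)
    (hcard : Fintype.card V = 4 * n)
    (hbis : IsBisection A B) (hA2n : A.card = 2 * n)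
    -- `{A,B}` is a minimum bisection, of cut size `mc = MinCut(G)`
    (hmin : ∀ R S : Finset V, IsBisection R S → EC G A B ≤ EC G R S)
    (hmc : mc = EC G A B)
    -- `D_C` is the organized-partition value of `{A,B}`
    (hDC : IsLeast {d : ℤ | ∃ A₁ A₂ B₁ B₂ : Finset V,
      A = A₁ ∪ A₂ ∧ Disjoint A₁ A₂ ∧ B = B₁ ∪ B₂ ∧ Disjoint B₁ B₂ ∧
      A₁.card = n ∧ A₂.card = n ∧ B₁.card = n ∧ B₂.card = n ∧
      d = (EC G A₁ A₂ + EC G B₁ B₂ : ℤ) - EC G A₁ B₁ - EC G A₂ B₂} DC)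
    -- `s = λ₂ + λ₃`, via its variational characterization
    (hs : IsLeast {r : ℝ | ∃ x y : V → ℝ, (∑ i, y i) = 0 ∧ (∑ i, x i) = 0 ∧
      (∑ i, (y i) ^ 2) = 1 ∧ (∑ i, (x i) ^ 2) = 1 ∧ y ⬝ᵥ x = 0 ∧
      r = y ⬝ᵥ ((G.lapMatrix ℝ) *ᵥ y) + x ⬝ᵥ ((G.lapMatrix ℝ) *ᵥ x)} s) :
    (mc : ℝ) ≥ (Fintype.card V : ℝ) / 8 * s - (DC : ℝ) / 2 := by
  classical
  -- handle n = 0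
  rcases Nat.eq_zero_or_pos n with hn0 | hn
  · exfalso
    obtain ⟨x, y, _, _, hy2, _, _, _⟩ := hs.1
    have hVe : Fintype.card V = 0 := by omega
    have : IsEmpty V := Fintype.card_eq_zero_iff.mp hVe
    simp [Finset.univ_eq_empty] at hy2
  obtain ⟨A₁, A₂, B₁, B₂, hAeq, hdA, hBeq, hdB, hc1, hc2, hc3, hc4, hDCeq⟩ := hDC.1
  have dAB : Disjoint A B := hbis.2.1
  have hA₁A : A₁ ⊆ A := hAeq ▸ Finset.subset_union_left
  have hA₂A : A₂ ⊆ A := hAeq ▸ Finset.subset_union_right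
  have hB₁B : B₁ ⊆ B := hBeq ▸ Finset.subset_union_left
  have hB₂B : B₂ ⊆ B := hBeq ▸ Finset.subset_union_right
  set S : Finset V := A₁ ∪ B₁ with hSdef
  set T : Finset V := A₂ ∪ B₂ with hTdef
  have dST : Disjoint S T := by
    rw [hSdef, hTdef]
    refine Finset.disjoint_union_left.mpr ⟨?_, ?_⟩ <;>
      refine Finset.disjoint_union_right.mpr ⟨?_, ?_⟩
    · exact hdA
    · exact dAB.mono hA₁A hB₂B
    · exact (dAB.mono hA₂A hB₁B).symm
    · exact hdB
  have huST : S ∪ T = Finset.univ := by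
    have : S ∪ T = A ∪ B := by
      rw [hSdef, hTdef, hAeq, hBeq]
      ext i; simp; tauto
    rw [this, hbis.1]
  have huAB : A ∪ B = Finset.univ := hbis.1
  -- the constant
  set c : ℝ := Real.sqrt (1 / (4 * n)) with hcdef
  have hn4 : (0:ℝ) < 4 * n := by positivity
  have hcsq : c ^ 2 = 1 / (4 * (n:ℝ)) := Real.sq_sqrt (by positivity)
  set y : V → ℝ := fun i => if i ∈ A then c else -c with hy
  set x : V → ℝ := fun i => if i ∈ S then c else -c with hx
  -- partition of univ into four parts
  have d12 : Disjoint (A₁ ∪ A₂) (B₁ ∪ B₂) := by rw [← hAeq, ← hBeq]; exact dAB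
  have huniv : (A₁ ∪ A₂) ∪ (B₁ ∪ B₂) = Finset.univ := by rw [← hAeq, ← hBeq]; exact huAB
  have hP : ∀ g : V → ℝ, ∑ i, g i
      = ∑ i ∈ A₁, g i + ∑ i ∈ A₂, g i + (∑ i ∈ B₁, g i + ∑ i ∈ B₂, g i) := by
    intro g
    rw [← Finset.sum_union hdA, ← Finset.sum_union hdB, ← Finset.sum_union d12, huniv]
  -- pointwise values
  have yA₁ : ∀ i ∈ A₁, y i = c := fun i hi => by simp [hy, hA₁A hi]
  have yA₂ : ∀ i ∈ A₂, y i = c := fun i hi => by simp [hy, hA₂A hi]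
  have yB₁ : ∀ i ∈ B₁, y i = -c := fun i hi => by
    have : i ∉ A := Finset.disjoint_right.mp dAB (hB₁B hi)
    simp [hy, this]
  have yB₂ : ∀ i ∈ B₂, y i = -c := fun i hi => by
    have : i ∉ A := Finset.disjoint_right.mp dAB (hB₂B hi)
    simp [hy, this]
  have xA₁ : ∀ i ∈ A₁, x i = c := fun i hi => by
    have : i ∈ S := Finset.mem_union_left _ hi
    simp [hx, this]
  have xB₁ : ∀ i ∈ B₁, x i = c := fun i hi => by
    have : i ∈ S := Finset.mem_union_right _ hi
    simp [hx, this]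
  have xA₂ : ∀ i ∈ A₂, x i = -c := fun i hi => by
    have : i ∉ S := Finset.disjoint_right.mp dST (Finset.mem_union_left _ hi)
    simp [hx, this]
  have xB₂ : ∀ i ∈ B₂, x i = -c := fun i hi => by
    have : i ∉ S := Finset.disjoint_right.mp dST (Finset.mem_union_right _ hi)
    simp [hx, this]
  have csum : ∀ (W : Finset V) (g : V → ℝ) (v : ℝ), (∀ i ∈ W, g i = v) →
      ∑ i ∈ W, g i = W.card * v := by
    intro W g v h
    rw [Finset.sum_congr rfl h, Finset.sum_const, nsmul_eq_mul]
  -- the membership conditions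
  have hysum : (∑ i, y i) = 0 := by
    rw [hP, csum A₁ y c yA₁, csum A₂ y c yA₂, csum B₁ y (-c) yB₁, csum B₂ y (-c) yB₂,
      hc1, hc2, hc3, hc4]
    ring
  have hxsum : (∑ i, x i) = 0 := by
    rw [hP, csum A₁ x c xA₁, csum A₂ x (-c) xA₂, csum B₁ x c xB₁, csum B₂ x (-c) xB₂,
      hc1, hc2, hc3, hc4]
    ring
  have hysq : (∑ i, (y i) ^ 2) = 1 := by
    have : ∀ i : V, (y i)^2 = c^2 := by
      intro i; by_cases h : i ∈ A <;> simp [hy, h]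
    rw [Finset.sum_congr rfl (fun i _ => this i), Finset.sum_const, nsmul_eq_mul]
    rw [Finset.card_univ, hcard, hcsq]
    push_cast
    field_simp
  have hxsq : (∑ i, (x i) ^ 2) = 1 := by
    have : ∀ i : V, (x i)^2 = c^2 := by
      intro i; by_cases h : i ∈ S <;> simp [hx, h]
    rw [Finset.sum_congr rfl (fun i _ => this i), Finset.sum_const, nsmul_eq_mul]
    rw [Finset.card_univ, hcard, hcsq]
    push_cast
    field_simp
  have hyx : y ⬝ᵥ x = 0 := by
    show ∑ i, y i * x i = 0
    rw [hP,
      csum A₁ _ (c * c) (fun i hi => by rw [yA₁ i hi, xA₁ i hi]),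
      csum A₂ _ (c * -c) (fun i hi => by rw [yA₂ i hi, xA₂ i hi]),
      csum B₁ _ (-c * c) (fun i hi => by rw [yB₁ i hi, xB₁ i hi]),
      csum B₂ _ (-c * -c) (fun i hi => by rw [yB₂ i hi, xB₂ i hi]),
      hc1, hc2, hc3, hc4]
    ring
  -- the quadratic forms
  have hQy : y ⬝ᵥ (G.lapMatrix ℝ *ᵥ y) = 4 * c^2 * EC G A B := by
    rw [hy]; exact quad_form G A B huAB dAB c
  have hQx : x ⬝ᵥ (G.lapMatrix ℝ *ᵥ x) = 4 * c^2 * EC G S T := by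
    rw [hx]; exact quad_form G S T huST dST c
  set r : ℝ := 4 * c^2 * EC G A B + 4 * c^2 * EC G S T with hr
  have hrmem : r ∈ {r : ℝ | ∃ x y : V → ℝ, (∑ i, y i) = 0 ∧ (∑ i, x i) = 0 ∧
      (∑ i, (y i) ^ 2) = 1 ∧ (∑ i, (x i) ^ 2) = 1 ∧ y ⬝ᵥ x = 0 ∧
      r = y ⬝ᵥ ((G.lapMatrix ℝ) *ᵥ y) + x ⬝ᵥ ((G.lapMatrix ℝ) *ᵥ x)} := by
    exact ⟨x, y, hysum, hxsum, hysq, hxsq, hyx, by rw [hQy, hQx]⟩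
  have hsler : s ≤ r := hs.2 hrmem
  -- EC decompositions
  have hECAB : (EC G A B : ℝ)
      = EC G A₁ B₁ + EC G A₁ B₂ + EC G A₂ B₁ + EC G A₂ B₂ := by
    rw [EC_eq_sum, hAeq, hBeq, Finset.sum_union hdA]
    rw [EC_eq_sum, EC_eq_sum, EC_eq_sum, EC_eq_sum]
    have h1 : ∀ W : Finset V, ∑ i ∈ W, ∑ j ∈ B₁ ∪ B₂, (if G.Adj i j then (1:ℝ) else 0)
        = ∑ i ∈ W, ∑ j ∈ B₁, (if G.Adj i j then (1:ℝ) else 0)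
          + ∑ i ∈ W, ∑ j ∈ B₂, (if G.Adj i j then (1:ℝ) else 0) := by
      intro W
      rw [← Finset.sum_add_distrib]
      exact Finset.sum_congr rfl fun i _ => Finset.sum_union hdB
    rw [h1, h1]
    ring
  have hECST : (EC G S T : ℝ)
      = EC G A₁ A₂ + EC G A₁ B₂ + EC G B₁ A₂ + EC G B₁ B₂ := by
    rw [EC_eq_sum, hSdef, hTdef, Finset.sum_union (dAB.mono hA₁A hB₁B)]
    rw [EC_eq_sum, EC_eq_sum, EC_eq_sum, EC_eq_sum]
    have h1 : ∀ W : Finset V, ∑ i ∈ W, ∑ j ∈ A₂ ∪ B₂, (if G.Adj i j then (1:ℝ) else 0)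
        = ∑ i ∈ W, ∑ j ∈ A₂, (if G.Adj i j then (1:ℝ) else 0)
          + ∑ i ∈ W, ∑ j ∈ B₂, (if G.Adj i j then (1:ℝ) else 0) := by
      intro W
      rw [← Finset.sum_add_distrib]
      exact Finset.sum_congr rfl fun i _ => Finset.sum_union (dAB.mono hA₂A hB₂B)
    rw [h1, h1]
    ring
  have hswap : (EC G B₁ A₂ : ℝ) = EC G A₂ B₁ := EC_comm G B₁ A₂
  have hDCr : (DC : ℝ) = (EC G A₁ A₂ : ℝ) + EC G B₁ B₂ - EC G A₁ B₁ - EC G A₂ B₂ := by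
    rw [hDCeq]; push_cast; ring
  have hmcr : (mc : ℝ) = EC G A B := by rw [hmc]
  -- final computation
  have hNc : (Fintype.card V : ℝ) * c ^ 2 = 1 := by
    rw [hcard, hcsq]; push_cast; field_simp
  have key : (Fintype.card V : ℝ) / 8 * r - (DC : ℝ) / 2 = mc := by
    have expand : (Fintype.card V : ℝ) / 8 * (4 * c^2 * (EC G A B : ℝ)
        + 4 * c^2 * (EC G S T : ℝ))
        = ((Fintype.card V : ℝ) * c^2) * ((EC G A B : ℝ) + (EC G S T : ℝ)) / 2 := by
      ring
    rw [hr, expand, hNc, hDCr, hmcr, hECAB, hECST, hswap]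
    ring
  have hN8 : (0:ℝ) ≤ (Fintype.card V : ℝ) / 8 := by positivity
  have : (Fintype.card V : ℝ) / 8 * s ≤ (Fintype.card V : ℝ) / 8 * r :=
    mul_le_mul_of_nonneg_left hsler hN8
  linarith [key]
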